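/- Define maps h_n : 2^{≤n} → 2^{<ω} recursively by h₀(⟨⟩) = ⟨⟩; given h_n, set k_n := max{length(h_n(η)) + 1 : η ∈ 2^{≤n}} and h_{n+1}(⟨⟩) = ⟨⟩, h_{n+1}(⟨1⟩⌢ν) = ⟨1⟩⌢h_n(ν), h_{n+1}(⟨0⟩⌢ν) = 0^{k_n} ⌢ h_n(ν) (where 0^{k_n} is a block of k_n zeroes). Then each h_n is injective, preserves the initial-segment relation and its negation (ρ ⊴ ν iff h_n(ρ) ⊴ h_n(ν)), preserves meets up to the relation 'σ ⊴ the meet', and satisfies: (ν⌢⟨0⟩ ⊴ η iff h_n(ν)⌢⟨0⟩ ⊴ h_n(η)) for all ν, η in the domain. -/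

import Mathlib

/-- All binary sequences of length at most `n`, as a list. -/
def binLists : ℕ → List (List (Fin 2))
  | 0 => [[]]
  | n + 1 =>
      binLists n ++ (binLists n).map (List.cons (0 : Fin 2)) ++
        (binLists n).map (List.cons (1 : Fin 2))

/-- The recursively defined maps `h_n : 2^{≤n} → 2^{<ω}`: `h₀(⟨⟩) = ⟨⟩`,
`h_{n+1}(⟨⟩) = ⟨⟩`, `h_{n+1}(⟨1⟩⌢ν) = ⟨1⟩⌢h_n(ν)`, and
`h_{n+1}(⟨0⟩⌢ν) = 0^{k_n} ⌢ h_n(ν)` where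
`k_n = max{length (h_n η) + 1 : η ∈ 2^{≤n}}`. -/
def H : ℕ → List (Fin 2) → List (Fin 2) :=
  Nat.rec (motive := fun _ => List (Fin 2) → List (Fin 2)) (fun _ => [])
    (fun n h η =>
      match η with
      | [] => []
      | a :: ν =>
          if a = (1 : Fin 2) then (1 : Fin 2) :: h ν
          else
            List.replicate (((binLists n).map fun ρ => (h ρ).length + 1).foldr max 0)
              (0 : Fin 2) ++ h ν)

/-- The meet (longest common initial segment) of two binary sequences. -/
def meet : List (Fin 2) → List (Fin 2) → List (Fin 2)
  | a :: s, b :: t => if a = b then a :: meet s t else []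
  | _, _ => []

/-!
`h_{n+1}` sends `a ⌢ ν` to `a ⌢ p(a) ⌢ h_n(ν)` for a padding `p(a)` depending only on `a`
(here `k_n ≥ 1` is used: the block `0^{k_n}` begins with `0`). Comparing the first letters
and cancelling the common padding reduces both prefix statements for `h_{n+1}` to those for
`h_n`. Injectivity follows from the antisymmetry of `⊴`, and the meet statement from the
fact that `σ ⊴ meet ρ ν` iff `σ ⊴ ρ` and `σ ⊴ ν`.
-/

theorem List.cons_append_prefix_cons_append_iff {α : Type*} (p : α → List α) (a b : α)
    (u v : List α) : a :: (p a ++ u) <+: b :: (p b ++ v) ↔ a = b ∧ u <+: v := by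
  rw [List.cons_prefix_cons]
  constructor
  · rintro ⟨rfl, h⟩
    exact ⟨rfl, List.prefix_append_right_inj _ |>.mp h⟩
  · rintro ⟨rfl, h⟩
    exact ⟨rfl, List.prefix_append_right_inj _ |>.mpr h⟩

theorem prefix_meet_iff (u s t : List (Fin 2)) : u <+: meet s t ↔ u <+: s ∧ u <+: t := by
  induction u generalizing s t with
  | nil => simp
  | cons c u ih =>
    rcases s with _ | ⟨a, s⟩ <;> rcases t with _ | ⟨b, t⟩
    all_goals simp only [meet, List.prefix_nil, reduceCtorEq, false_and, and_false]
    split_ifs with hab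
    · subst hab
      simp only [List.cons_prefix_cons, ih]
      tauto
    · simp only [List.prefix_nil, reduceCtorEq, List.cons_prefix_cons, false_iff]
      rintro ⟨⟨rfl, -⟩, rfl, -⟩
      exact hab rfl

theorem nil_mem_binLists (n : ℕ) : [] ∈ binLists n := by
  induction n with
  | zero => simp [binLists]
  | succ n ih => simp [binLists, ih]

def zeroBlockLength (n : ℕ) : ℕ := ((binLists n).map fun ρ => (H n ρ).length + 1).foldr max 0

theorem one_le_zeroBlockLength (n : ℕ) : 1 ≤ zeroBlockLength n :=
  List.le_max_of_le' 0 (List.mem_map_of_mem (nil_mem_binLists n)) (Nat.le_add_left 1 _)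

theorem H_zero (η : List (Fin 2)) : H 0 η = [] := rfl

theorem H_succ_nil (n : ℕ) : H (n + 1) [] = [] := rfl

theorem H_succ_cons_zero (n : ℕ) (ν : List (Fin 2)) :
    H (n + 1) (0 :: ν) = List.replicate (zeroBlockLength n) 0 ++ H n ν := rfl

theorem H_succ_cons_one (n : ℕ) (ν : List (Fin 2)) : H (n + 1) (1 :: ν) = 1 :: H n ν := rfl

theorem exists_H_succ_cons (n : ℕ) :
    ∃ p : Fin 2 → List (Fin 2), ∀ a ν, H (n + 1) (a :: ν) = a :: (p a ++ H n ν) := by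
  obtain ⟨k, hk⟩ := Nat.exists_eq_add_of_le' (one_le_zeroBlockLength n)
  refine ⟨fun a => if a = 1 then [] else List.replicate k 0, fun a ν => ?_⟩
  fin_cases a
  · simp [H_succ_cons_zero, hk, List.replicate_succ]
  · simp [H_succ_cons_one]

theorem prefix_iff_prefix_H (n : ℕ) (ρ ν : List (Fin 2)) (hρ : ρ.length ≤ n)
    (hν : ν.length ≤ n) : ρ <+: ν ↔ H n ρ <+: H n ν := by
  induction n generalizing ρ ν with
  | zero => simp_all
  | succ n ih =>
    obtain ⟨p, hp⟩ := exists_H_succ_cons n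
    rcases ρ with _ | ⟨a, ρ⟩ <;> rcases ν with _ | ⟨b, ν⟩
    all_goals simp only [H_succ_nil, hp, List.nil_prefix, List.prefix_nil, reduceCtorEq]
    simp only [List.length_cons, Nat.add_le_add_iff_right] at hρ hν
    rw [List.cons_prefix_cons, List.cons_append_prefix_cons_append_iff, ih ρ ν hρ hν]

theorem append_zero_prefix_iff_append_zero_prefix_H (n : ℕ) (ρ ν : List (Fin 2))
    (hρ : ρ.length ≤ n) (hν : ν.length ≤ n) :
    ν ++ [0] <+: ρ ↔ H n ν ++ [0] <+: H n ρ := by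
  induction n generalizing ρ ν with
  | zero => simp_all [H_zero]
  | succ n ih =>
    obtain ⟨p, hp⟩ := exists_H_succ_cons n
    rcases ρ with _ | ⟨a, ρ⟩ <;> rcases ν with _ | ⟨b, ν⟩
    · simp [H_succ_nil]
    · simp [H_succ_nil, hp]
    · simp [H_succ_nil, hp]
    · simp only [List.length_cons, Nat.add_le_add_iff_right] at hρ hν
      rw [hp, hp, List.cons_append, List.cons_append, List.append_assoc,
        List.cons_append_prefix_cons_append_iff, List.cons_prefix_cons, ih ρ ν hρ hν]

/-- Each `h_n` is injective on `2^{≤n}`, preserves the initial-segment relation and its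
negation, preserves meets up to the relation `σ ⊴ (meet of the pair)`, and satisfies
`ν⌢⟨0⟩ ⊴ η` iff `h_n(ν)⌢⟨0⟩ ⊴ h_n(η)`. -/
theorem H_properties (n : ℕ) (ρ ν σ : List (Fin 2))
    (hρ : ρ.length ≤ n) (hν : ν.length ≤ n) (hσ : σ.length ≤ n) :
    (H n ρ = H n ν → ρ = ν) ∧
    (ρ <+: ν ↔ H n ρ <+: H n ν) ∧
    (σ <+: meet ρ ν ↔ H n σ <+: meet (H n ρ) (H n ν)) ∧
    (ν ++ [(0 : Fin 2)] <+: ρ ↔ H n ν ++ [(0 : Fin 2)] <+: H n ρ) := by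
  refine ⟨fun h => ?_, prefix_iff_prefix_H n ρ ν hρ hν, ?_,
    append_zero_prefix_iff_append_zero_prefix_H n ρ ν hρ hν⟩
  · have hρν : ρ <+: ν := (prefix_iff_prefix_H n ρ ν hρ hν).mpr (h ▸ List.prefix_refl _)
    have hνρ : ν <+: ρ := (prefix_iff_prefix_H n ν ρ hν hρ).mpr (h ▸ List.prefix_refl _)
    exact hρν.sublist.antisymm hνρ.sublist
  · rw [prefix_meet_iff, prefix_meet_iff, prefix_iff_prefix_H n σ ρ hσ hρ,
      prefix_iff_prefix_H n σ ν hσ hν]
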